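/- Distributional swap invariance for statistics with the generalized sufficiency property: let X̃ be a knockoff matrix for X, let β ∈ ℝ^p, σ > 0, and let Y be distributed as N(Xβ, σ²I_n). Let f be a measurable function mapping a 2p×2p matrix, a vector in ℝ^{2p}, and a real number to ℝ^p, and define W(y) = f(AᵀA, Aᵀy, ‖y‖₂). Then for every subset S of the null set {j : β_j = 0}, the pushforward of N(Xβ, σ²I_n) under y ↦ f(A_swap(S)ᵀA_swap(S), A_swap(S)ᵀ y, ‖y‖₂) equals the pushforward of N(Xβ, σ²I_n) under y ↦ W(y); that is, W_swap(S) has the same distribution as W. -/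

import Mathlib

/-!
Since `X̃` is a knockoff of `X`, the Gram matrix `AᵀA` of `A = [X X̃]` is unchanged by the
swap, so `A_swap(S) = T A` for an orthogonal map `T` of `ℝⁿ`. Then
`A_swap(S)ᵀ y = Aᵀ (T⁻¹ y)` and `‖T⁻¹ y‖ = ‖y‖`, i.e. `W_swap(S) = W ∘ T⁻¹`. The swapped
columns carry zero coefficients, so `T (Xβ) = A_swap(S) (β, 0) = A (β, 0) = Xβ`; as the
standard Gaussian is rotation invariant, `T⁻¹` preserves `N(Xβ, σ²Iₙ)`.
-/

open Matrix MeasureTheory ProbabilityTheory BigOperators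

/-- The product σ-algebra on matrices (entrywise). -/
instance matrixMeasurableSpace {m n α : Type*} [MeasurableSpace α] :
    MeasurableSpace (Matrix m n α) :=
  MeasurableSpace.pi

/-- The column-index permutation that swaps an original feature `j` with its
knockoff copy exactly when `j ∈ S`. -/
def knockoffSwap {p : ℕ} (S : Finset (Fin p)) : Fin p ⊕ Fin p → Fin p ⊕ Fin p
  | Sum.inl j => if j ∈ S then Sum.inr j else Sum.inl j
  | Sum.inr j => if j ∈ S then Sum.inl j else Sum.inr j

/-- The Gaussian measure `N(μ, σ²Iₙ)` on `ℝⁿ`: the pushforward of the `n`-fold product of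
standard real Gaussians under `y ↦ μ + σ·y`. -/
noncomputable def gaussianVec {n : ℕ} (μ : Fin n → ℝ) (σ : ℝ) :
    Measure (Fin n → ℝ) :=
  (Measure.pi fun _ : Fin n => gaussianReal 0 1).map fun y => μ + σ • y

open scoped RealInnerProductSpace

/-- Equal norms force `ker φ = ker ψ`, so `φ x ↦ ψ x` is a well-defined isometry on the range
of `φ`, which extends to all of the finite-dimensional space `E`. -/
theorem LinearMap.exists_linearIsometryEquiv_apply_eq {𝕜 V E : Type*} [RCLike 𝕜]
    [AddCommGroup V] [Module 𝕜 V] [NormedAddCommGroup E] [InnerProductSpace 𝕜 E]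
    [FiniteDimensional 𝕜 E] (φ ψ : V →ₗ[𝕜] E) (h : ∀ x, ‖φ x‖ = ‖ψ x‖) :
    ∃ T : E ≃ₗᵢ[𝕜] E, ∀ x, T (φ x) = ψ x := by
  have hker : LinearMap.ker φ ≤ LinearMap.ker ψ := fun x hx => by
    rw [LinearMap.mem_ker, ← norm_eq_zero, ← h, norm_eq_zero]
    exact hx
  let L₀ : LinearMap.range φ →ₗ[𝕜] E :=
    (LinearMap.ker φ).liftQ ψ hker ∘ₗ φ.quotKerEquivRange.symm.toLinearMap
  have hL₀ : ∀ x, L₀ ⟨φ x, LinearMap.mem_range_self φ x⟩ = ψ x := fun x => by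
    simp [L₀, LinearMap.quotKerEquivRange_symm_apply_image]
  let L : LinearMap.range φ →ₗᵢ[𝕜] E :=
    { toLinearMap := L₀
      norm_map' := by
        rintro ⟨_, x, rfl⟩
        rw [hL₀, ← h]
        rfl }
  refine ⟨L.extend.toLinearIsometryEquiv rfl, fun x => ?_⟩
  exact (L.extend_apply ⟨φ x, LinearMap.mem_range_self φ x⟩).trans (hL₀ x)

theorem measure_pi_gaussianReal_map_linearIsometryEquiv {ι : Type*} [Fintype ι]
    (T : EuclideanSpace ℝ ι ≃ₗᵢ[ℝ] EuclideanSpace ℝ ι) :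
    (Measure.pi fun _ : ι => gaussianReal 0 1).map (fun y => (T (WithLp.toLp 2 y)).ofLp)
      = Measure.pi fun _ : ι => gaussianReal 0 1 := by
  have hpi : Measure.pi (fun _ : ι => gaussianReal 0 1)
      = (stdGaussian (EuclideanSpace ℝ ι)).map WithLp.ofLp := by
    rw [← map_pi_eq_stdGaussian, Measure.map_map (by fun_prop) (by fun_prop)]
    exact Measure.map_id.symm
  rw [hpi, Measure.map_map (by fun_prop) (by fun_prop)]
  change (stdGaussian _).map (WithLp.ofLp ∘ T) = _
  rw [← Measure.map_map (by fun_prop) (by fun_prop), stdGaussian_map]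

theorem gaussianVec_map_linearIsometryEquiv {n : ℕ} (μ : Fin n → ℝ) (σ : ℝ)
    (T : EuclideanSpace ℝ (Fin n) ≃ₗᵢ[ℝ] EuclideanSpace ℝ (Fin n))
    (hμ : T (WithLp.toLp 2 μ) = WithLp.toLp 2 μ) :
    (gaussianVec μ σ).map (fun y => (T (WithLp.toLp 2 y)).ofLp) = gaussianVec μ σ := by
  have hcomm : (fun y => (T (WithLp.toLp 2 y)).ofLp) ∘ (fun y => μ + σ • y)
      = (fun y => μ + σ • y) ∘ (fun y => (T (WithLp.toLp 2 y)).ofLp) := by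
    ext y : 1
    simp [hμ]
  rw [gaussianVec, Measure.map_map (by fun_prop) (by fun_prop), hcomm,
    ← Measure.map_map (by fun_prop) (by fun_prop),
    measure_pi_gaussianReal_map_linearIsometryEquiv]

namespace Matrix

variable {m ι : Type*} [Fintype m] [Fintype ι]

theorem norm_toLp_mulVec_sq (B : Matrix m ι ℝ) (v : ι → ℝ) :
    ‖WithLp.toLp 2 (B *ᵥ v)‖ ^ 2 = v ⬝ᵥ (Bᵀ * B) *ᵥ v := by
  rw [← real_inner_self_eq_norm_sq, EuclideanSpace.inner_eq_star_dotProduct, star_trivial,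
    WithLp.ofLp_toLp, ← mulVec_mulVec, dotProduct_mulVec v, vecMul_transpose]

theorem exists_linearIsometryEquiv_of_transpose_mul_self_eq [DecidableEq ι] {B C : Matrix m ι ℝ}
    (h : Bᵀ * B = Cᵀ * C) :
    ∃ T : EuclideanSpace ℝ m ≃ₗᵢ[ℝ] EuclideanSpace ℝ m,
      ∀ v, T (WithLp.toLp 2 (B *ᵥ v)) = WithLp.toLp 2 (C *ᵥ v) :=
  LinearMap.exists_linearIsometryEquiv_apply_eq
    ((WithLp.linearEquiv 2 ℝ (m → ℝ)).symm.toLinearMap ∘ₗ B.mulVecLin)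
    ((WithLp.linearEquiv 2 ℝ (m → ℝ)).symm.toLinearMap ∘ₗ C.mulVecLin) fun v => by
      simpa using (sq_eq_sq₀ (norm_nonneg _) (norm_nonneg _)).1
        ((norm_toLp_mulVec_sq B v).trans (h ▸ norm_toLp_mulVec_sq C v).symm)

theorem transpose_mulVec_eq_of_linearIsometryEquiv {B C : Matrix m ι ℝ}
    (T : EuclideanSpace ℝ m ≃ₗᵢ[ℝ] EuclideanSpace ℝ m)
    (hT : ∀ v, T (WithLp.toLp 2 (B *ᵥ v)) = WithLp.toLp 2 (C *ᵥ v)) (y : m → ℝ) :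
    Cᵀ *ᵥ y = Bᵀ *ᵥ (T.symm (WithLp.toLp 2 y)).ofLp := by
  classical
  ext j
  have key := T.inner_map_eq_flip (WithLp.toLp 2 (B *ᵥ Pi.single j 1)) (WithLp.toLp 2 y)
  rw [hT] at key
  show C.col j ⬝ᵥ y = B.col j ⬝ᵥ (T.symm (WithLp.toLp 2 y)).ofLp
  simpa [EuclideanSpace.inner_eq_star_dotProduct, mulVec_single_one, dotProduct_comm] using key

end Matrix

section knockoffSwap

variable {p : ℕ} (S : Finset (Fin p))

theorem knockoffSwap_involutive : Function.Involutive (knockoffSwap S) := by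
  rintro (j | j) <;> by_cases hj : j ∈ S <;> simp [knockoffSwap, hj]

abbrev knockoffSwapPerm : Equiv.Perm (Fin p ⊕ Fin p) :=
  (knockoffSwap_involutive S).toPerm

theorem sumElim_zero_comp_knockoffSwap {R : Type*} [Zero R] {β : Fin p → R}
    (hS : ∀ j ∈ S, β j = 0) : Sum.elim β 0 ∘ knockoffSwap S = Sum.elim β 0 := by
  ext (j | j) <;> by_cases hj : j ∈ S <;> simp [knockoffSwap, hj, hS]

theorem fromBlocks_submatrix_knockoffSwap {R : Type*} [AddGroup R]
    (G : Matrix (Fin p) (Fin p) R) (d : Fin p → R) :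
    (fromBlocks G (G - diagonal d) (G - diagonal d) G).submatrix
        (knockoffSwap S) (knockoffSwap S)
      = fromBlocks G (G - diagonal d) (G - diagonal d) G := by
  ext (a | a) (b | b) <;> by_cases ha : a ∈ S <;> by_cases hb : b ∈ S <;>
    obtain rfl | hab := eq_or_ne a b <;> simp_all [knockoffSwap]

theorem submatrix_knockoffSwap_mulVec_sumElim_zero {m R : Type*} [NonUnitalNonAssocSemiring R]
    (A : Matrix m (Fin p ⊕ Fin p) R) {β : Fin p → R} (hS : ∀ j ∈ S, β j = 0) :
    A.submatrix id (knockoffSwap S) *ᵥ Sum.elim β 0 = A *ᵥ Sum.elim β 0 := by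
  have := submatrix_mulVec_equiv A (Sum.elim β 0) id (knockoffSwapPerm S)
  simpa [knockoffSwapPerm, sumElim_zero_comp_knockoffSwap S hS] using this

theorem transpose_fromCols_mul_fromCols_of_knockoff {m R : Type*} [Fintype m] [CommRing R]
    {X Xt : Matrix m (Fin p) R} {s : Fin p → R} (hk1 : Xtᵀ * Xt = Xᵀ * X)
    (hk2 : Xᵀ * Xt = Xᵀ * X - diagonal s) :
    (fromCols X Xt)ᵀ * fromCols X Xt
      = fromBlocks (Xᵀ * X) (Xᵀ * X - diagonal s) (Xᵀ * X - diagonal s) (Xᵀ * X) := by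
  have hk2' : Xtᵀ * X = Xᵀ * X - diagonal s := by
    rw [← transpose_transpose (Xtᵀ * X), transpose_mul, transpose_transpose, hk2,
      transpose_sub, transpose_mul, transpose_transpose, diagonal_transpose]
  rw [transpose_fromCols, fromRows_mul_fromCols, hk1, hk2, hk2']

theorem transpose_mul_self_fromCols_submatrix_knockoffSwap {m R : Type*} [Fintype m] [CommRing R]
    {X Xt : Matrix m (Fin p) R} {s : Fin p → R} (hk1 : Xtᵀ * Xt = Xᵀ * X)
    (hk2 : Xᵀ * Xt = Xᵀ * X - diagonal s) :
    ((fromCols X Xt).submatrix id (knockoffSwap S))ᵀ *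
        (fromCols X Xt).submatrix id (knockoffSwap S)
      = (fromCols X Xt)ᵀ * fromCols X Xt := by
  have := submatrix_mul_equiv (fromCols X Xt)ᵀ (fromCols X Xt) (knockoffSwapPerm S)
    (Equiv.refl m) (knockoffSwapPerm S)
  simp only [Equiv.coe_refl, knockoffSwapPerm, Function.Involutive.coe_toPerm] at this
  rw [transpose_submatrix, this, transpose_fromCols_mul_fromCols_of_knockoff hk1 hk2,
    fromBlocks_submatrix_knockoffSwap]

end knockoffSwap

theorem knockoff_swap_distribution_invariance_general (n p : ℕ)
    (X Xt : Matrix (Fin n) (Fin p) ℝ) (s : Fin p → ℝ)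
    (hk1 : Xtᵀ * Xt = Xᵀ * X)
    (hk2 : Xᵀ * Xt = Xᵀ * X - Matrix.diagonal s)
    (β : Fin p → ℝ) (σ : ℝ)
    (f : Matrix (Fin p ⊕ Fin p) (Fin p ⊕ Fin p) ℝ → ((Fin p ⊕ Fin p) → ℝ) → ℝ →
      (Fin p → ℝ))
    (hf : Measurable fun x : Matrix (Fin p ⊕ Fin p) (Fin p ⊕ Fin p) ℝ ×
        ((Fin p ⊕ Fin p) → ℝ) × ℝ => f x.1 x.2.1 x.2.2)
    (S : Finset (Fin p)) (hS : ∀ j ∈ S, β j = 0) :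
    (gaussianVec (X.mulVec β) σ).map
        (fun y =>
          f (((Matrix.fromCols X Xt).submatrix id (knockoffSwap S))ᵀ *
              (Matrix.fromCols X Xt).submatrix id (knockoffSwap S))
            (((Matrix.fromCols X Xt).submatrix id (knockoffSwap S))ᵀ.mulVec y)
            (Real.sqrt (∑ i, y i ^ 2)))
      = (gaussianVec (X.mulVec β) σ).map
          (fun y =>
            f ((Matrix.fromCols X Xt)ᵀ * Matrix.fromCols X Xt)
              ((Matrix.fromCols X Xt)ᵀ.mulVec y)
              (Real.sqrt (∑ i, y i ^ 2))) := by
  set A := fromCols X Xt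
  set As := A.submatrix id (knockoffSwap S)
  obtain ⟨T, hT⟩ := exists_linearIsometryEquiv_of_transpose_mul_self_eq
    (transpose_mul_self_fromCols_submatrix_knockoffSwap S hk1 hk2).symm
  have hmean : T (WithLp.toLp 2 (X *ᵥ β)) = WithLp.toLp 2 (X *ᵥ β) := by
    have hXβ : A *ᵥ Sum.elim β 0 = X *ᵥ β := by simp [A]
    rw [← hXβ, hT, submatrix_knockoffSwap_mulVec_sumElim_zero S A hS]
  have hnorm : ∀ y : Fin n → ℝ, √(∑ i, y i ^ 2) = ‖WithLp.toLp 2 y‖ := fun y => by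
    simp [EuclideanSpace.norm_eq]
  have hswap : (fun y => f (Asᵀ * As) (Asᵀ *ᵥ y) √(∑ i, y i ^ 2))
      = (fun y => f (Aᵀ * A) (Aᵀ *ᵥ y) √(∑ i, y i ^ 2))
        ∘ fun y => (T.symm (WithLp.toLp 2 y)).ofLp := by
    ext y : 1
    simp only [Function.comp_apply, hnorm, WithLp.toLp_ofLp, LinearIsometryEquiv.norm_map]
    rw [transpose_mul_self_fromCols_submatrix_knockoffSwap S hk1 hk2,
      transpose_mulVec_eq_of_linearIsometryEquiv T hT]
  rw [hswap, ← Measure.map_map (by fun_prop) (by fun_prop),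
    gaussianVec_map_linearIsometryEquiv _ _ _ ((T.symm_apply_eq).2 hmean.symm)]

/-- **Distributional swap invariance for statistics with the generalized sufficiency
property.** Let `X̃` be a knockoff matrix for `X`, `Y ∼ N(Xβ, σ²Iₙ)`, and let the
statistic be `W(y) = f(AᵀA, Aᵀy, ‖y‖₂)` for a measurable `f`, where `A = [X X̃]`.
Then for every subset `S` of the nulls `{j : β_j = 0}`, the statistic
`W_swap(S)(y) = f(A_swap(S)ᵀA_swap(S), A_swap(S)ᵀy, ‖y‖₂)` has the same distribution
as `W`. -/
theorem knockoff_swap_distribution_invariance (n p : ℕ)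
    (X Xt : Matrix (Fin n) (Fin p) ℝ) (s : Fin p → ℝ)
    (hk1 : Xtᵀ * Xt = Xᵀ * X)
    (hk2 : Xᵀ * Xt = Xᵀ * X - Matrix.diagonal s)
    (hk3 : ∀ j, 0 ≤ s j)
    (β : Fin p → ℝ) (σ : ℝ) (hσ : 0 < σ)
    (f : Matrix (Fin p ⊕ Fin p) (Fin p ⊕ Fin p) ℝ → ((Fin p ⊕ Fin p) → ℝ) → ℝ →
      (Fin p → ℝ))
    (hf : Measurable fun x : Matrix (Fin p ⊕ Fin p) (Fin p ⊕ Fin p) ℝ ×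
        ((Fin p ⊕ Fin p) → ℝ) × ℝ => f x.1 x.2.1 x.2.2)
    (S : Finset (Fin p)) (hS : ∀ j ∈ S, β j = 0) :
    (gaussianVec (X.mulVec β) σ).map
        (fun y =>
          f (((Matrix.fromCols X Xt).submatrix id (knockoffSwap S))ᵀ *
              (Matrix.fromCols X Xt).submatrix id (knockoffSwap S))
            (((Matrix.fromCols X Xt).submatrix id (knockoffSwap S))ᵀ.mulVec y)
            (Real.sqrt (∑ i, y i ^ 2)))
      = (gaussianVec (X.mulVec β) σ).map
          (fun y =>
            f ((Matrix.fromCols X Xt)ᵀ * Matrix.fromCols X Xt)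
              ((Matrix.fromCols X Xt)ᵀ.mulVec y)
              (Real.sqrt (∑ i, y i ^ 2))) :=
  knockoff_swap_distribution_invariance_general n p X Xt s hk1 hk2 β σ f hf S hS
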